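/- arXiv:1804.01267 — 5 statements merged into one kernel-verified Lean document; each statement's English description precedes it below -/
import Mathlib

section
/- Let G be a topological group and α : G → G a contractive automorphism, i.e. a topological group automorphism with α^n(g) → e for every g ∈ G. If G has a nilpotent open subgroup, then G is nilpotent. -/
/-!
The class of a nilpotent group is detected by the vanishing of the left-normed commutators
`⁅⁅⁅g, x₁⁆, x₂⁆, …, x_c⁆`. Given finitely many elements of `G`, a high enough power of the
contractive automorphism `α` moves all of them into the open subgroup `U`, where such commutators
of length `c` vanish; as `α` is injective, the commutator itself is trivial in `G`.
-/

open scoped commutatorElement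

section IterCommutator

variable {G : Type*} [Group G]

def iterCommutator (g : G) (xs : List G) : G :=
  xs.foldl (fun a b => ⁅a, b⁆) g

@[simp]
lemma iterCommutator_nil (g : G) : iterCommutator g [] = g := rfl

@[simp]
lemma iterCommutator_cons (g x : G) (xs : List G) :
    iterCommutator g (x :: xs) = iterCommutator ⁅g, x⁆ xs := rfl

lemma map_iterCommutator {H F : Type*} [Group H] [FunLike F G H] [MonoidHomClass F G H]
    (f : F) (g : G) (xs : List G) :
    f (iterCommutator g xs) = iterCommutator (f g) (xs.map f) := by
  induction xs generalizing g with
  | nil => rfl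
  | cons x xs ih => simp [ih, map_commutatorElement]

lemma iterCommutator_mem_lowerCentralSeries {S : Subgroup G} {g : G} {n : ℕ}
    (hg : g ∈ S.lowerCentralSeries n) {xs : List G} (hxs : ∀ x ∈ xs, x ∈ S) :
    iterCommutator g xs ∈ S.lowerCentralSeries (n + xs.length) := by
  induction xs generalizing g n with
  | nil => exact hg
  | cons x xs ih =>
    rw [iterCommutator_cons, List.length_cons, add_comm xs.length 1, ← add_assoc]
    refine ih (n := n + 1) (Subgroup.commutator_mem_commutator hg (hxs x List.mem_cons_self)) ?_
    exact fun y hy => hxs y (List.mem_cons_of_mem x hy)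

lemma mem_upperCentralSeries_of_iterCommutator_eq_one {g : G} {n : ℕ}
    (h : ∀ xs : List G, xs.length = n → iterCommutator g xs = 1) :
    g ∈ Subgroup.upperCentralSeries G n := by
  induction n generalizing g with
  | zero => simpa [Subgroup.upperCentralSeries_zero] using h [] rfl
  | succ n ih =>
    rw [Subgroup.mem_upperCentralSeries_succ_iff]
    exact fun y => ih fun xs hxs => h (y :: xs) (by simp [hxs])

theorem Group.isNilpotent_of_forall_exists_injective_map_mem (U : Subgroup G)
    [Group.IsNilpotent U]
    (h : ∀ l : List G, ∃ f : G →* G, Function.Injective f ∧ ∀ x ∈ l, f x ∈ U) :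
    Group.IsNilpotent G := by
  obtain ⟨c, hc⟩ := (Subgroup.isNilpotent_iff_lowerCentralSeries U).mp ‹_›
  refine ⟨c, eq_top_iff.mpr fun g _ => mem_upperCentralSeries_of_iterCommutator_eq_one ?_⟩
  intro xs hxs
  obtain ⟨f, hf, hfU⟩ := h (g :: xs)
  have hmem : f (iterCommutator g xs) ∈ U.lowerCentralSeries c := by
    rw [map_iterCommutator, ← hxs, ← zero_add (xs.length), ← List.length_map f]
    refine iterCommutator_mem_lowerCentralSeries (hfU g List.mem_cons_self) ?_
    simpa using fun x hx => hfU x (List.mem_cons_of_mem g hx)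
  rw [hc, Subgroup.mem_bot] at hmem
  exact hf (hmem.trans (map_one f).symm)

end IterCommutator

theorem stmt4_general {G : Type*} [Group G] [TopologicalSpace G]
    (α : G ≃* G)
    (hcontr : ∀ g : G, Filter.Tendsto (fun n : ℕ => (⇑α)^[n] g) Filter.atTop (nhds 1))
    (U : Subgroup G) (hUopen : IsOpen (U : Set G)) (hUnilp : Group.IsNilpotent U) :
    Group.IsNilpotent G := by
  refine Group.isNilpotent_of_forall_exists_injective_map_mem U fun l => ?_
  have hev : ∀ᶠ N in Filter.atTop, ∀ x ∈ l, (⇑α)^[N] x ∈ U :=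
    (Filter.eventually_all_finite l.finite_toSet).mpr fun x _ =>
      (hcontr x).eventually (hUopen.mem_nhds U.one_mem)
  obtain ⟨N, hN⟩ := hev.exists
  let φ : Monoid.End G := α.toMonoidHom
  exact ⟨φ ^ N, α.injective.iterate N, hN⟩

/-- Let `G` be a topological group and `α` a contractive automorphism
(a group automorphism, continuous with continuous inverse, with `α^[n] g → 1` for all
`g`). If `G` has a nilpotent open subgroup, then `G` is nilpotent. -/
theorem stmt4 {G : Type*} [Group G] [TopologicalSpace G] [IsTopologicalGroup G]
    (α : G ≃* G) (hα : Continuous α) (hα' : Continuous α.symm)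
    (hcontr : ∀ g : G, Filter.Tendsto (fun n : ℕ => (⇑α)^[n] g) Filter.atTop (nhds 1))
    (U : Subgroup G) (hUopen : IsOpen (U : Set G)) (hUnilp : Group.IsNilpotent U) :
    Group.IsNilpotent G :=
  stmt4_general α hcontr U hUopen hUnilp
end

section
/- Let G be a topological group and α : G → G a contractive automorphism. If G has a soluble open subgroup, then G is soluble. -/
/-!
If `α^k x → 1` for every `x` and `U` is an open subgroup, every `x` satisfies `α^k x ∈ U` for
all large `k`. Since the `α^k` are homomorphisms, induction along the derived series shows that
every element of `G⁽ᵐ⁾` is eventually mapped by `α^k` into `U⁽ᵐ⁾`. Taking `m` with `U⁽ᵐ⁾ = 1`,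
injectivity of `α^k` gives `G⁽ᵐ⁾ = 1`.
-/

open Filter

namespace Subgroup

variable {ι G K : Type*} [Group G] [Group K]

def eventuallyComap (f : ι → G →* K) (l : Filter ι) (H : Subgroup K) : Subgroup G where
  carrier := {x | ∀ᶠ i in l, f i x ∈ H}
  one_mem' := by simp
  mul_mem' ha hb := by
    filter_upwards [ha, hb] with i hai hbi
    simpa using H.mul_mem hai hbi
  inv_mem' ha := by
    filter_upwards [ha] with i hai
    simpa using H.inv_mem hai

variable {f : ι → G →* K} {l : Filter ι}

@[simp]
theorem mem_eventuallyComap {H : Subgroup K} {x : G} :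
    x ∈ eventuallyComap f l H ↔ ∀ᶠ i in l, f i x ∈ H :=
  Iff.rfl

theorem commutator_eventuallyComap_le (H₁ H₂ : Subgroup K) :
    ⁅eventuallyComap f l H₁, eventuallyComap f l H₂⁆ ≤ eventuallyComap f l ⁅H₁, H₂⁆ := by
  rw [commutator_le]
  intro a ha b hb
  filter_upwards [ha, hb] with i hai hbi
  rw [map_commutatorElement]
  exact commutator_mem_commutator hai hbi

theorem derivedSeries_le_eventuallyComap {H : Subgroup K} (hH : eventuallyComap f l H = ⊤)
    (n : ℕ) : derivedSeries G n ≤ eventuallyComap f l ((derivedSeries H n).map H.subtype) := by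
  induction n with
  | zero => simpa [← MonoidHom.range_eq_map] using hH.ge
  | succ n ih =>
    rw [derivedSeries_succ, derivedSeries_succ, map_commutator]
    exact (commutator_mono ih ih).trans (commutator_eventuallyComap_le _ _)

theorem eventuallyComap_bot [l.NeBot] (hf : ∀ i, Function.Injective (f i)) :
    eventuallyComap f l ⊥ = ⊥ := by
  refine eq_bot_iff.mpr fun x hx => ?_
  obtain ⟨i, hi⟩ := (mem_eventuallyComap.mp hx).exists
  exact (hf i).eq_iff' (map_one _) |>.mp hi

theorem isSolvable_of_eventuallyComap_eq_top [l.NeBot] (hf : ∀ i, Function.Injective (f i))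
    {H : Subgroup K} (hH : eventuallyComap f l H = ⊤) [Group.IsSolvable H] :
    Group.IsSolvable G := by
  obtain ⟨n, hn⟩ := Group.IsSolvable.solvable (G := H)
  refine ⟨n, eq_bot_iff.mpr ?_⟩
  simpa [hn, eventuallyComap_bot hf] using derivedSeries_le_eventuallyComap hH n

end Subgroup

theorem stmt5_general {G : Type*} [Group G] [TopologicalSpace G]
    (α : G ≃* G)
    (hcontr : ∀ g : G, Filter.Tendsto (fun n : ℕ => (⇑α)^[n] g) Filter.atTop (nhds 1))
    (U : Subgroup G) (hUopen : IsOpen (U : Set G)) (hUsol : IsSolvable U) :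
    IsSolvable G := by
  -- powers in `Monoid.End G`, whose coercions are `(⇑α)^[k]` by `rfl`
  let f : ℕ → G →* G := fun k => (show Monoid.End G from α.toMonoidHom) ^ k
  have hf : ∀ k, Function.Injective (f k) := fun k => α.injective.iterate k
  have hU : Subgroup.eventuallyComap f atTop U = ⊤ :=
    eq_top_iff.mpr fun x _ => (hcontr x).eventually_mem (hUopen.mem_nhds U.one_mem)
  have : Group.IsSolvable U := hUsol
  exact Subgroup.isSolvable_of_eventuallyComap_eq_top hf hU

/-- Let `G` be a topological group and `α` a contractive automorphism
(a group automorphism, continuous with continuous inverse, with `α^[n] g → 1` for all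
`g`). If `G` has a soluble open subgroup, then `G` is soluble. -/
theorem stmt5 {G : Type*} [Group G] [TopologicalSpace G] [IsTopologicalGroup G]
    (α : G ≃* G) (hα : Continuous α) (hα' : Continuous α.symm)
    (hcontr : ∀ g : G, Filter.Tendsto (fun n : ℕ => (⇑α)^[n] g) Filter.atTop (nhds 1))
    (U : Subgroup G) (hUopen : IsOpen (U : Set G)) (hUsol : IsSolvable U) :
    IsSolvable G :=
  stmt5_general α hcontr U hUopen hUsol
end

section
/- Let G be a group, x an element of (G,*) where G carries the BCH group structure of a finite-dimensional nilpotent Lie algebra over ℝ or ℚ_p. Then for all n ∈ ℤ, the n-th group power x^n (computed with BCH multiplication) equals the scalar multiple n·x. Consequently the group (𝔤,*) is torsion-free and every element is uniquely divisible. -/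
open scoped Topology

/-- `m` is the Baker–Campbell–Hausdorff multiplication on the Lie algebra `𝔤` over `𝕂`,
characterized by its properties (see the paper): continuity, associativity, neutral
element `0` (with inversion `x ↦ -x`), agreement with addition on commuting elements, and
recovery of the bracket from rescaled group commutators. -/
def IsBCHMul (𝕂 : Type*) [NontriviallyNormedField 𝕂] {𝔤 : Type*}
    [NormedAddCommGroup 𝔤] [NormedSpace 𝕂 𝔤] [LieRing 𝔤] [LieAlgebra 𝕂 𝔤]
    (m : 𝔤 → 𝔤 → 𝔤) : Prop :=
  Continuous (fun p : 𝔤 × 𝔤 => m p.1 p.2) ∧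
  (∀ x y z : 𝔤, m (m x y) z = m x (m y z)) ∧
  (∀ x : 𝔤, m x 0 = x) ∧ (∀ x : 𝔤, m 0 x = x) ∧
  (∀ x y : 𝔤, ⁅x, y⁆ = 0 → m x y = x + y) ∧
  (∀ x y : 𝔤, Filter.Tendsto
    (fun t : 𝕂 => (t⁻¹ * t⁻¹) • m (m (t • x) (t • y)) (m (-(t • x)) (-(t • y))))
    (𝓝[≠] (0 : 𝕂)) (𝓝 ⁅x, y⁆))

/-- `n`-th power of `x` in the group `(𝔤, m)`. -/
def bchPow {𝔤 : Type*} [AddCommGroup 𝔤] (m : 𝔤 → 𝔤 → 𝔤) (x : 𝔤) : ℕ → 𝔤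
  | 0 => 0
  | n + 1 => m x (bchPow m x n)

/-- `n`-th power of `x` in the group `(𝔤, m)` for `n : ℤ` (the group inverse of `x` in a
BCH group is `-x`). -/
def bchZPow {𝔤 : Type*} [AddCommGroup 𝔤] (m : 𝔤 → 𝔤 → 𝔤) (x : 𝔤) : ℤ → 𝔤
  | Int.ofNat n => bchPow m x n
  | Int.negSucc n => bchPow m (-x) (n + 1)

section BCHPowers

variable {𝔤 : Type*} [LieRing 𝔤] {m : 𝔤 → 𝔤 → 𝔤}

theorem bchPow_eq_nsmul (hm : ∀ x y : 𝔤, ⁅x, y⁆ = 0 → m x y = x + y) (x : 𝔤) :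
    ∀ n : ℕ, bchPow m x n = n • x
  | 0 => (zero_nsmul x).symm
  | n + 1 => by
    have hcomm : ⁅x, n • x⁆ = 0 := by rw [lie_nsmul, lie_self, nsmul_zero]
    rw [bchPow, bchPow_eq_nsmul hm x n, hm x _ hcomm, succ_nsmul']

theorem bchZPow_eq_zsmul (hm : ∀ x y : 𝔤, ⁅x, y⁆ = 0 → m x y = x + y) (x : 𝔤) :
    ∀ n : ℤ, bchZPow m x n = n • x
  | Int.ofNat n => by rw [bchZPow, bchPow_eq_nsmul hm, Int.ofNat_eq_natCast, natCast_zsmul]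
  | Int.negSucc n => by rw [bchZPow, bchPow_eq_nsmul hm, negSucc_zsmul, smul_neg]

end BCHPowers

theorem existsUnique_nsmul_eq {𝕂 V : Type*} [DivisionRing 𝕂] [CharZero 𝕂] [AddCommGroup V]
    [Module 𝕂 V] {n : ℕ} (hn : n ≠ 0) (v : V) : ∃! w : V, n • w = v := by
  have hn' : (n : 𝕂) ≠ 0 := Nat.cast_ne_zero.mpr hn
  refine ⟨(n : 𝕂)⁻¹ • v, ?_, fun w hw => ?_⟩
  · show n • ((n : 𝕂)⁻¹ • v) = v
    rw [← Nat.cast_smul_eq_nsmul 𝕂, smul_smul, mul_inv_cancel₀ hn', one_smul]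
  · rw [← hw, ← Nat.cast_smul_eq_nsmul 𝕂, smul_smul, inv_mul_cancel₀ hn', one_smul]

theorem stmt9_general {𝕂 : Type*} [NontriviallyNormedField 𝕂] [CharZero 𝕂]
    {𝔤 : Type*}
    [NormedAddCommGroup 𝔤] [NormedSpace 𝕂 𝔤] [LieRing 𝔤] [LieAlgebra 𝕂 𝔤]
    (m : 𝔤 → 𝔤 → 𝔤) (hm : IsBCHMul 𝕂 m) :
    (∀ (x : 𝔤) (n : ℤ), bchZPow m x n = n • x) ∧
    (∀ (x : 𝔤) (n : ℕ), 0 < n → bchPow m x n = 0 → x = 0) ∧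
    (∀ (g : 𝔤) (n : ℕ), 0 < n → ∃! h : 𝔤, bchPow m h n = g) := by
  -- `+`, `•` and `0` here all come from `LieRing 𝔤` and `LieAlgebra 𝕂 𝔤`, not from the norm,
  -- so the bracket is additive in the same structure as the one in which powers are computed.
  obtain ⟨-, -, -, -, hadd, -⟩ := hm
  refine ⟨bchZPow_eq_zsmul hadd, fun x n hn hx => ?_, fun g n hn => ?_⟩
  · rw [bchPow_eq_nsmul hadd] at hx
    exact (existsUnique_nsmul_eq (𝕂 := 𝕂) hn.ne' 0).unique hx (nsmul_zero n)
  · simpa only [bchPow_eq_nsmul hadd] using existsUnique_nsmul_eq (𝕂 := 𝕂) hn.ne' g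

/-- In the BCH group `(𝔤, *)` of a finite-dimensional nilpotent Lie
algebra over `ℝ` or `ℚ_p` (formalized: a nontrivially normed field of characteristic
zero), the `n`-th group power of `x` equals `n • x` for all `n : ℤ`. Consequently the
group `(𝔤, *)` is torsion-free and every element is uniquely divisible. -/
theorem stmt9 {𝕂 : Type*} [NontriviallyNormedField 𝕂] [CharZero 𝕂]
    {𝔤 : Type*}
    [NormedAddCommGroup 𝔤] [NormedSpace 𝕂 𝔤] [LieRing 𝔤] [LieAlgebra 𝕂 𝔤]
    [FiniteDimensional 𝕂 𝔤] [LieRing.IsNilpotent 𝔤]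
    (m : 𝔤 → 𝔤 → 𝔤) (hm : IsBCHMul 𝕂 m) :
    (∀ (x : 𝔤) (n : ℤ), bchZPow m x n = n • x) ∧
    (∀ (x : 𝔤) (n : ℕ), 0 < n → bchPow m x n = 0 → x = 0) ∧
    (∀ (g : 𝔤) (n : ℕ), 0 < n → ∃! h : 𝔤, bchPow m h n = g) :=
  stmt9_general m hm
end

section
/- Let A = F_p((t)) with contractive automorphism α(x) = t·x. For n ∈ ℤ define ω_n : A × A → A by ω_n(x, y) = ∑_{i} x_i y_{i+n} t^i, where x = ∑ x_i t^i and y = ∑ y_j t^j (with coefficients eventually indexed from below). Then ω_n is well-defined (the series converges), continuous, biadditive, equivariant (ω_n(tx, ty) = t·ω_n(x,y)), and satisfies |ω_n(x,y)| ≤ |x| for all x, y ∈ A. -/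
open scoped Classical

/-- The absolute value on `F_p((t))`: `|x| = p^{-N}` where `N` is the least index with
nonzero coefficient, and `|0| = 0`. -/
noncomputable def labs (p : ℕ) (x : LaurentSeries (ZMod p)) : ℝ :=
  if x = 0 then 0 else (p : ℝ) ^ (-(HahnSeries.order x))

/-- The biadditive map `ω_n(x,y) = ∑_i x_i y_{i+n} t^i` on `F_p((t))`, defined
coefficientwise (which encodes the convergence of the defining series). -/
noncomputable def omegaMap (p : ℕ) (n : ℤ) (x y : LaurentSeries (ZMod p)) :
    LaurentSeries (ZMod p) where
  coeff := fun i => x.coeff i * y.coeff (i + n)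
  isPWO_support' := x.isPWO_support.mono fun _ hi => left_ne_zero_of_mul hi

/-- The element `t ∈ F_p((t))`. -/
noncomputable def tVar (p : ℕ) : LaurentSeries (ZMod p) := HahnSeries.single 1 1

/-!
Everything is read off coefficientwise. A nonzero coefficient of `ω_n(x, y)` at `i` forces
nonzero coefficients of `x` at `i` and of `y` at `i + n`, whence `|ω_n(x, y)| ≤ |x|` and
`|ω_n(x, y)| ≤ p^n |y|`. Since
`ω_n(x', y') - ω_n(x, y) = ω_n(x' - x, y') + ω_n(x, y' - y)`,
the ultrametric inequality turns these two bounds into joint continuity.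
-/

open HahnSeries

section

variable {p : ℕ}

theorem labs_nonneg (x : LaurentSeries (ZMod p)) : 0 ≤ labs p x := by
  unfold labs
  split_ifs <;> positivity

theorem labs_le_zpow_mul_labs_of_coeff_ne_zero (hp : 1 ≤ p) (k : ℤ)
    {z w : LaurentSeries (ZMod p)} (h : ∀ i, z.coeff i ≠ 0 → w.coeff (i + k) ≠ 0) :
    labs p z ≤ (p : ℝ) ^ k * labs p w := by
  by_cases hz : z = 0
  · rw [labs, if_pos hz]
    exact mul_nonneg (by positivity) (labs_nonneg w)
  have hw : w ≠ 0 := by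
    rintro rfl
    exact h _ (coeff_order_eq_zero.not.mpr hz) rfl
  have hord : w.order ≤ z.order + k :=
    order_le_of_coeff_ne_zero (h _ (coeff_order_eq_zero.not.mpr hz))
  rw [labs, if_neg hz, labs, if_neg hw, ← zpow_add₀ (by exact_mod_cast (by omega : p ≠ 0))]
  exact zpow_le_zpow_right₀ (Nat.one_le_cast.mpr hp) (by omega)

theorem labs_add_le (hp : 1 ≤ p) (x y : LaurentSeries (ZMod p)) :
    labs p (x + y) ≤ max (labs p x) (labs p y) := by
  rcases eq_or_ne x 0 with rfl | hx
  · simp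
  rcases eq_or_ne y 0 with rfl | hy
  · simp
  rcases eq_or_ne (x + y) 0 with hxy | hxy
  · rw [labs, if_pos hxy]
    exact le_max_of_le_left (labs_nonneg x)
  have hmin := min_order_le_order_add hxy
  have hp' : (1 : ℝ) ≤ p := Nat.one_le_cast.mpr hp
  rw [labs, if_neg hxy, labs, if_neg hx, labs, if_neg hy]
  rcases le_total x.order y.order with h | h
  · rw [min_eq_left h] at hmin
    exact le_max_of_le_left (zpow_le_zpow_right₀ hp' (neg_le_neg hmin))
  · rw [min_eq_right h] at hmin
    exact le_max_of_le_right (zpow_le_zpow_right₀ hp' (neg_le_neg hmin))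

@[simp]
theorem omegaMap_coeff (n : ℤ) (x y : LaurentSeries (ZMod p)) (i : ℤ) :
    (omegaMap p n x y).coeff i = x.coeff i * y.coeff (i + n) :=
  rfl

theorem omegaMap_add_left (n : ℤ) (x x' y : LaurentSeries (ZMod p)) :
    omegaMap p n (x + x') y = omegaMap p n x y + omegaMap p n x' y := by
  ext i
  simp only [omegaMap_coeff, coeff_add, add_mul]

theorem omegaMap_add_right (n : ℤ) (x y y' : LaurentSeries (ZMod p)) :
    omegaMap p n x (y + y') = omegaMap p n x y + omegaMap p n x y' := by
  ext i
  simp only [omegaMap_coeff, coeff_add, mul_add]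

theorem omegaMap_sub_omegaMap (n : ℤ) (x x' y y' : LaurentSeries (ZMod p)) :
    omegaMap p n x' y' - omegaMap p n x y =
      omegaMap p n (x' - x) y' + omegaMap p n x (y' - y) := by
  ext i
  simp only [omegaMap_coeff, coeff_add, coeff_sub]
  ring

theorem coeff_tVar_mul (z : LaurentSeries (ZMod p)) (j : ℤ) :
    (tVar p * z).coeff j = z.coeff (j - 1) := by
  rw [← sub_add_cancel j 1, tVar, coeff_single_mul_add, one_mul, add_sub_cancel_right]

theorem omegaMap_tVar_mul (n : ℤ) (x y : LaurentSeries (ZMod p)) :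
    omegaMap p n (tVar p * x) (tVar p * y) = tVar p * omegaMap p n x y := by
  ext i
  simp only [omegaMap_coeff, coeff_tVar_mul, sub_add_eq_add_sub]

theorem labs_omegaMap_le_left (hp : 1 ≤ p) (n : ℤ) (x y : LaurentSeries (ZMod p)) :
    labs p (omegaMap p n x y) ≤ labs p x := by
  simpa using labs_le_zpow_mul_labs_of_coeff_ne_zero hp 0 fun i hi =>
    by simpa using left_ne_zero_of_mul hi

theorem labs_omegaMap_le_right (hp : 1 ≤ p) (n : ℤ) (x y : LaurentSeries (ZMod p)) :
    labs p (omegaMap p n x y) ≤ (p : ℝ) ^ n * labs p y :=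
  labs_le_zpow_mul_labs_of_coeff_ne_zero hp n fun _ hi => right_ne_zero_of_mul hi

theorem exists_labs_omegaMap_sub_lt (hp : 1 ≤ p) (n : ℤ) (x y : LaurentSeries (ZMod p))
    {ε : ℝ} (hε : 0 < ε) : ∃ δ : ℝ, 0 < δ ∧ ∀ x' y' : LaurentSeries (ZMod p),
      labs p (x' - x) < δ → labs p (y' - y) < δ →
        labs p (omegaMap p n x' y' - omegaMap p n x y) < ε := by
  have hp0 : (0 : ℝ) < p := by exact_mod_cast hp
  refine ⟨min ε ((p : ℝ) ^ (-n) * ε), by positivity, fun x' y' hx hy => ?_⟩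
  rw [omegaMap_sub_omegaMap]
  refine (labs_add_le hp _ _).trans_lt (max_lt ?_ ?_)
  · exact (labs_omegaMap_le_left hp n _ _).trans_lt (hx.trans_le (min_le_left _ _))
  · calc labs p (omegaMap p n x (y' - y)) ≤ (p : ℝ) ^ n * labs p (y' - y) :=
          labs_omegaMap_le_right hp n _ _
      _ < (p : ℝ) ^ n * ((p : ℝ) ^ (-n) * ε) :=
          mul_lt_mul_of_pos_left (hy.trans_le (min_le_right _ _)) (by positivity)
      _ = ε := by rw [← mul_assoc, ← zpow_add₀ hp0.ne', add_neg_cancel, zpow_zero, one_mul]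

end

/-- The map `ω_n(x,y) = ∑_i x_i y_{i+n} t^i` on `A = F_p((t))` is
well-defined (with the stated coefficients), continuous (jointly, in the ultrametric
sense), biadditive, equivariant (`ω_n(tx,ty) = t ω_n(x,y)`), and satisfies
`|ω_n(x,y)| ≤ |x|`. -/
theorem stmt12 {p : ℕ} (hp : p.Prime) (n : ℤ) :
    -- well-defined, with the defining coefficients
    (∀ x y : LaurentSeries (ZMod p), ∀ i : ℤ,
        (omegaMap p n x y).coeff i = x.coeff i * y.coeff (i + n)) ∧
    -- jointly continuous
    (∀ x y : LaurentSeries (ZMod p), ∀ ε : ℝ, 0 < ε → ∃ δ : ℝ, 0 < δ ∧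
        ∀ x' y' : LaurentSeries (ZMod p), labs p (x' - x) < δ → labs p (y' - y) < δ →
          labs p (omegaMap p n x' y' - omegaMap p n x y) < ε) ∧
    -- biadditive
    (∀ x x' y : LaurentSeries (ZMod p),
        omegaMap p n (x + x') y = omegaMap p n x y + omegaMap p n x' y) ∧
    (∀ x y y' : LaurentSeries (ZMod p),
        omegaMap p n x (y + y') = omegaMap p n x y + omegaMap p n x y') ∧
    -- equivariant
    (∀ x y : LaurentSeries (ZMod p),
        omegaMap p n (tVar p * x) (tVar p * y) = tVar p * omegaMap p n x y) ∧
    -- bounded by |x|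
    (∀ x y : LaurentSeries (ZMod p), labs p (omegaMap p n x y) ≤ labs p x) :=
  ⟨omegaMap_coeff n, fun x y _ hε => exists_labs_omegaMap_sub_lt hp.one_lt.le n x y hε,
    omegaMap_add_left n, omegaMap_add_right n, omegaMap_tVar_mul n,
    labs_omegaMap_le_left hp.one_lt.le n⟩
end

section
/- Let A = F_p((t)), s ∈ {0,1}^ℕ with s ≠ 0, and let η_s be the continuous equivariant biadditive 2-cocycle η_s(x,y) = ∑_n s_n t^n ω_{2n}(x,y). Equip A × A with the group law (a₁,b₁)(a₂,b₂) = (a₁ + a₂ + η_s(b₁,b₂), b₁ + b₂). Then the centre of this group A ×_{η_s} A equals A × {0}. If s = 0 the group is abelian. -/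
open scoped Classical

/-- Subsets of `ℤ` bounded below are partially well ordered. -/
theorem intIci_isPWO (c : ℤ) : (Set.Ici c).IsPWO := by
  have h : Set.IsPWO (Set.univ : Set ℕ) := by
    first
    | exact (Set.isWF_univ_iff.2 wellFounded_lt).isPWO
    | exact (Set.isWF_of_wellFoundedLT _).isPWO
    | exact (Set.IsWF.of_wellFoundedLT _).isPWO
    | exact Set.isPWO_of_wellQuasiOrderedLE _
  have himg := h.image_of_monotone (f := fun n : ℕ => c + (n : ℤ))
    (fun a b hab => by simp only; omega)
  refine himg.mono ?_
  intro j hj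
  refine ⟨(j - c).toNat, trivial, ?_⟩
  have : (0:ℤ) ≤ j - c := by simpa using hj
  simp [Int.toNat_of_nonneg this]

/-- `η_s(x,y) = ∑_{n ≥ 1} s_n t^n ω_{2n}(x,y)` on `F_p((t))`, where
`ω_k(x,y) = ∑_i x_i y_{i+k} t^i`; defined coefficientwise: the coefficient of `t^j` is
`∑_{n ≥ 1} s_n x_{j-n} y_{j+n}` (a finite sum). -/
noncomputable def etaMap (p : ℕ) (s : ℕ → Fin 2) (x y : LaurentSeries (ZMod p)) :
    LaurentSeries (ZMod p) where
  coeff := fun j => ∑ᶠ n : ℕ,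
    if 1 ≤ n then ((s n : ℕ) : ZMod p) * x.coeff (j - n) * y.coeff (j + n) else 0
  isPWO_support' := by
    refine (intIci_isPWO (x.order + 1)).mono ?_
    intro j hj
    rw [Function.mem_support] at hj
    have hex : ∃ n : ℕ, (if 1 ≤ n then ((s n : ℕ) : ZMod p) * x.coeff (j - n) * y.coeff (j + n) else 0) ≠ 0 := by
      by_contra h
      push_neg at h
      exact hj (finsum_eq_zero_of_forall_eq_zero h)
    obtain ⟨n, hn⟩ := hex
    have h1 : 1 ≤ n := by
      by_contra h
      rw [if_neg h] at hn
      exact hn rfl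
    rw [if_pos h1] at hn
    have hxne : x.coeff (j - n) ≠ 0 := by
      intro h0
      apply hn
      rw [h0, mul_zero, zero_mul]
    have horder : x.order ≤ j - n := HahnSeries.order_le_of_coeff_ne_zero hxne
    have hn' : (1 : ℤ) ≤ (n : ℤ) := by exact_mod_cast h1
    have : x.order + 1 ≤ j := by linarith
    exact this

/-- The group multiplication of the central extension `A ×_{η_s} A`,
`(a₁,b₁)(a₂,b₂) = (a₁ + a₂ + η_s(b₁,b₂), b₁ + b₂)`. -/
noncomputable def etaMul (p : ℕ) (s : ℕ → Fin 2)
    (z w : LaurentSeries (ZMod p) × LaurentSeries (ZMod p)) :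
    LaurentSeries (ZMod p) × LaurentSeries (ZMod p) :=
  (z.1 + w.1 + etaMap p s z.2 w.2, z.2 + w.2)


/-! Writing `m = ord b` and choosing `N ≥ 1` with `s_N = 1`, test commutation against the monomial
`y = t^(m + 2N)`. In the coefficient of `t^(m + N)`, the term `n = N` of `η_s(b, y)` contributes
`b_m ≠ 0`, while `η_s(y, b)` has no term there, since `y` would have to appear at the index
`m + N - n < m + 2N`. Conversely, `η_s` vanishes as soon as one argument does, or when `s = 0`. -/

namespace EtaMap

variable {p : ℕ} {s : ℕ → Fin 2}

lemma coeff_eq (x y : LaurentSeries (ZMod p)) (j : ℤ) :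
    (etaMap p s x y).coeff j = ∑ᶠ n : ℕ,
      if 1 ≤ n then ((s n : ℕ) : ZMod p) * x.coeff (j - n) * y.coeff (j + n) else 0 :=
  rfl

lemma eq_zero_of_forall_term_eq_zero {x y : LaurentSeries (ZMod p)}
    (h : ∀ (j : ℤ) (n : ℕ), 1 ≤ n →
      ((s n : ℕ) : ZMod p) * x.coeff (j - n) * y.coeff (j + n) = 0) :
    etaMap p s x y = 0 := by
  ext j
  rw [coeff_eq, HahnSeries.coeff_zero]
  refine finsum_eq_zero_of_forall_eq_zero fun n => ?_
  split_ifs with hn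
  exacts [h j n hn, rfl]

@[simp]
lemma zero_left (y : LaurentSeries (ZMod p)) : etaMap p s 0 y = 0 :=
  eq_zero_of_forall_term_eq_zero fun _ _ _ => by simp

@[simp]
lemma zero_right (x : LaurentSeries (ZMod p)) : etaMap p s x 0 = 0 :=
  eq_zero_of_forall_term_eq_zero fun _ _ _ => by simp

lemma eq_zero_of_forall_eq_zero (hs : ∀ n : ℕ, 1 ≤ n → s n = 0) (x y : LaurentSeries (ZMod p)) :
    etaMap p s x y = 0 :=
  eq_zero_of_forall_term_eq_zero fun _ n hn => by simp [hs n hn]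

lemma coeff_single_right {N : ℕ} (hN : 1 ≤ N) (x : LaurentSeries (ZMod p)) (j : ℤ) (c : ZMod p) :
    (etaMap p s x (HahnSeries.single (j + N) c)).coeff j =
      ((s N : ℕ) : ZMod p) * x.coeff (j - N) * c := by
  rw [coeff_eq, finsum_eq_single _ N, if_pos hN, HahnSeries.coeff_single_same]
  intro n hn
  have hjn : j + n ≠ j + N := by exact_mod_cast fun h => hn (by omega)
  simp [hjn]

lemma coeff_single_left_eq_zero {j k : ℤ} (hjk : j ≤ k) (c : ZMod p)
    (y : LaurentSeries (ZMod p)) :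
    (etaMap p s (HahnSeries.single k c) y).coeff j = 0 := by
  rw [coeff_eq]
  refine finsum_eq_zero_of_forall_eq_zero fun n => ?_
  split_ifs with hn
  · have hjn : j - n ≠ k := by omega
    simp [hjn]
  · rfl

lemma eq_zero_of_forall_comm {N : ℕ} (hN : 1 ≤ N) (hsN : s N ≠ 0) {b : LaurentSeries (ZMod p)}
    (hb : ∀ y, etaMap p s b y = etaMap p s y b) : b = 0 := by
  rw [← HahnSeries.coeff_order_eq_zero]
  set m := b.order
  have hcoeff := congrArg (HahnSeries.coeff · (m + N)) (hb (HahnSeries.single (m + N + N) 1))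
  simp only [coeff_single_right hN, coeff_single_left_eq_zero (by omega : m + N ≤ m + N + N)]
    at hcoeff
  simpa [Fin.eq_one_of_ne_zero _ hsN] using hcoeff

end EtaMap

lemma etaMul_comm_iff (p : ℕ) (s : ℕ → Fin 2)
    (z w : LaurentSeries (ZMod p) × LaurentSeries (ZMod p)) :
    etaMul p s z w = etaMul p s w z ↔ etaMap p s z.2 w.2 = etaMap p s w.2 z.2 := by
  simp [etaMul, Prod.ext_iff, add_comm z.1, add_comm z.2]

theorem stmt16_general {p : ℕ} (s : ℕ → Fin 2) :
    ((∃ n : ℕ, 1 ≤ n ∧ s n ≠ 0) →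
      ∀ z : LaurentSeries (ZMod p) × LaurentSeries (ZMod p),
        ((∀ w, etaMul p s z w = etaMul p s w z) ↔ z.2 = 0)) ∧
    ((∀ n : ℕ, 1 ≤ n → s n = 0) →
      ∀ z w : LaurentSeries (ZMod p) × LaurentSeries (ZMod p),
        etaMul p s z w = etaMul p s w z) := by
  simp only [etaMul_comm_iff]
  refine ⟨fun ⟨N, hN, hsN⟩ z => ⟨fun hz => ?_, fun hz w => ?_⟩, fun hs z w => ?_⟩
  · exact EtaMap.eq_zero_of_forall_comm hN hsN fun y => hz (0, y)
  · simp [hz]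
  · simp [EtaMap.eq_zero_of_forall_eq_zero hs]

/-- For `s ∈ {0,1}^ℕ` with `s ≠ 0` (some `s_n ≠ 0`, `n ≥ 1`), the
centre of the group `A ×_{η_s} A` is exactly `A × {0}`; if `s = 0` the group is
abelian. -/
theorem stmt16 {p : ℕ} (hp : p.Prime) (s : ℕ → Fin 2) :
    ((∃ n : ℕ, 1 ≤ n ∧ s n ≠ 0) →
      ∀ z : LaurentSeries (ZMod p) × LaurentSeries (ZMod p),
        ((∀ w, etaMul p s z w = etaMul p s w z) ↔ z.2 = 0)) ∧
    ((∀ n : ℕ, 1 ≤ n → s n = 0) →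
      ∀ z w : LaurentSeries (ZMod p) × LaurentSeries (ZMod p),
        etaMul p s z w = etaMul p s w z) :=
  stmt16_general s
end
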